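/- arXiv:2408.04850 — 2 statements merged into one kernel-verified Lean document; each statement's English description precedes it below -/
import Mathlib

section
/- Let α be a totally real algebraic integer all of whose conjugates (over ℚ) lie in the open interval (-√2, √2). Then α ∈ {-1, 0, 1}. -/
/-!
Write the conjugates of `α` as real numbers `x` with `x ^ 2 < 2`. The factors
`x ^ 2 * (2 - x ^ 2) = 1 - (x ^ 2 - 1) ^ 2` then lie in `[0, 1]`, and their product is the
resultant of the minimal polynomial of `α` over `ℤ` and `X ^ 2 * (2 - X ^ 2)`, an integer.
If `α ∉ {-1, 0, 1}`, no conjugate is `0` and the factor at `α` is `< 1`, so this integer would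
lie strictly between `0` and `1`.
-/

open Polynomial

namespace Multiset

theorem exists_map_eq_of_forall_mem {α β : Type*} {f : β → α} {p : β → Prop} {s : Multiset α}
    (h : ∀ a ∈ s, ∃ b, a = f b ∧ p b) : ∃ t : Multiset β, t.map f = s ∧ ∀ b ∈ t, p b := by
  induction s using Multiset.induction with
  | empty => exact ⟨0, rfl, by simp⟩
  | cons a s ih =>
    simp only [mem_cons, forall_eq_or_imp] at h
    obtain ⟨⟨b, rfl, hb⟩, hs⟩ := h
    obtain ⟨t, rfl, ht⟩ := ih hs
    exact ⟨b ::ₘ t, by simp, by simpa [hb] using ht⟩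

theorem prod_map_aeval_map_algebraMap {R A B : Type*} [CommSemiring R] [CommSemiring A]
    [CommSemiring B] [Algebra R A] [Algebra A B] [Algebra R B] [IsScalarTower R A B]
    (s : Multiset A) (g : R[X]) :
    ((s.map (algebraMap A B)).map fun z => aeval z g).prod =
      algebraMap A B (s.map fun x => aeval x g).prod := by
  rw [map_multiset_prod, map_map, map_map]
  exact congrArg _ (map_congr rfl fun x _ => aeval_algebraMap_apply B x g)

section OrderedSemiring

variable {R : Type*} [CommSemiring R] [PartialOrder R] [IsOrderedRing R] {s : Multiset R}

theorem prod_le_one (h0 : ∀ x ∈ s, 0 ≤ x) (h1 : ∀ x ∈ s, x ≤ 1) : s.prod ≤ 1 := by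
  induction s using Multiset.induction with
  | empty => simp
  | cons b t ih =>
    simp only [mem_cons, forall_eq_or_imp] at h0 h1
    rw [prod_cons]
    exact mul_le_one₀ h1.1 (prod_nonneg h0.2) (ih h0.2 h1.2)

theorem prod_lt_one_of_mem (h0 : ∀ x ∈ s, 0 ≤ x) (h1 : ∀ x ∈ s, x ≤ 1) {a : R} (ha : a ∈ s)
    (ha1 : a < 1) : s.prod < 1 := by
  obtain ⟨t, rfl⟩ := exists_cons_of_mem ha
  simp only [mem_cons, forall_eq_or_imp] at h0 h1
  rw [prod_cons]
  exact mul_lt_one_of_nonneg_of_lt_one_left h0.1 ha1 (prod_le_one h0.2 h1.2)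

end OrderedSemiring

theorem prod_map_sq_mul_two_sub_sq_mem_Ioo {s : Multiset ℝ} (h0 : ∀ x ∈ s, x ≠ 0)
    (h2 : ∀ x ∈ s, x ^ 2 < 2) {a : ℝ} (ha : a ∈ s) (ha1 : a ^ 2 ≠ 1) :
    (s.map fun x => x ^ 2 * (2 - x ^ 2)).prod ∈ Set.Ioo 0 1 := by
  have hpos : ∀ x ∈ s, 0 < x ^ 2 * (2 - x ^ 2) := fun x hx =>
    mul_pos (sq_pos_of_ne_zero (h0 x hx)) (sub_pos.2 (h2 x hx))
  have hle : ∀ x ∈ s, x ^ 2 * (2 - x ^ 2) ≤ 1 := fun x _ => by nlinarith [sq_nonneg (x ^ 2 - 1)]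
  refine ⟨prod_pos (forall_mem_map_iff.2 hpos), prod_lt_one_of_mem
    (forall_mem_map_iff.2 fun x hx => (hpos x hx).le) (forall_mem_map_iff.2 hle)
    (mem_map_of_mem _ ha) ?_⟩
  nlinarith [sq_pos_of_ne_zero (sub_ne_zero.2 ha1)]

end Multiset

theorem Polynomial.Monic.prod_aroots_aeval_eq_resultant {R K : Type*} [CommRing R] [Field K]
    [Algebra R K] {f : R[X]} (hf : f.Monic) (hsplit : (f.map (algebraMap R K)).Splits)
    (g : R[X]) :
    ((f.aroots K).map fun z => aeval z g).prod = algebraMap R K (resultant f g) := by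
  rw [← resultant_map_map, ← hf.natDegree_map (algebraMap R K),
    resultant_eq_prod_eval _ _ _ natDegree_map_le hsplit, (hf.map _).leadingCoeff, one_pow,
    one_mul]
  simp only [eval_map_algebraMap]

namespace minpoly

theorem prod_aroots_aeval_eq_resultant {R K L : Type*} [CommRing R] [IsDomain R]
    [IsIntegrallyClosed R] [Field K] [Algebra R K] [IsFractionRing R K] [Field L] [IsAlgClosed L]
    [Algebra R L] [Algebra K L] [IsScalarTower R K L] {α : L} (hα : IsIntegral R α) (g : R[X]) :
    (((minpoly K α).aroots L).map fun z => Polynomial.aeval z g).prod =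
      algebraMap R L (resultant (minpoly R α) g) := by
  rw [isIntegrallyClosed_eq_field_fractions' K hα, aroots_map]
  exact (monic hα).prod_aroots_aeval_eq_resultant (IsAlgClosed.splits _) g

theorem zero_mem_aroots_iff {K A L : Type*} [Field K] [Ring A] [IsDomain A] [Algebra K A]
    [CommRing L] [IsDomain L] [Algebra K L] {x : A} (hx : IsIntegral K x) :
    (0 : L) ∈ (minpoly K x).aroots L ↔ x = 0 := by
  rw [mem_aroots, ← coeff_zero_eq_aeval_zero', map_eq_zero_iff _ (algebraMap K L).injective,
    coeff_zero_eq_zero hx, and_iff_right (ne_zero hx)]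

end minpoly

/-- A totally real algebraic integer all of whose conjugates over ℚ lie in
the open interval `(-√2, √2)` must be `-1`, `0`, or `1`. -/
theorem totally_real_small_conjugates (α : ℂ) (hint : IsIntegral ℤ α)
    (hconj : ∀ z ∈ (minpoly ℚ α).aroots ℂ,
      ∃ x : ℝ, z = (x : ℂ) ∧ -Real.sqrt 2 < x ∧ x < Real.sqrt 2) :
    α = -1 ∨ α = 0 ∨ α = 1 := by
  by_contra! hα
  obtain ⟨hα_neg_one, hα_zero, hα_one⟩ := hα
  have hαℚ : IsIntegral ℚ α := hint.tower_top
  obtain ⟨T, hST, hT⟩ := Multiset.exists_map_eq_of_forall_mem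
    (p := fun x => -Real.sqrt 2 < x ∧ x < Real.sqrt 2) hconj
  rw [← Complex.coe_algebraMap] at hST
  have hT0 : ∀ x ∈ T, x ≠ 0 := by
    rintro x hx rfl
    refine hα_zero ((minpoly.zero_mem_aroots_iff (L := ℂ) hαℚ).1 ?_)
    simpa only [hST, map_zero] using Multiset.mem_map_of_mem (algebraMap ℝ ℂ) hx
  obtain ⟨a, haT, haα⟩ := Multiset.mem_map.1 <|
    hST ▸ mem_aroots.2 ⟨minpoly.ne_zero hαℚ, minpoly.aeval ℚ α⟩
  have hN : ((resultant (minpoly ℤ α) (X ^ 2 * (2 - X ^ 2)) : ℤ) : ℝ) =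
      (T.map fun x => x ^ 2 * (2 - x ^ 2)).prod := by
    have hres := minpoly.prod_aroots_aeval_eq_resultant (K := ℚ) hint (X ^ 2 * (2 - X ^ 2))
    rw [← hST, Multiset.prod_map_aeval_map_algebraMap, eq_intCast (algebraMap ℤ ℂ),
      ← map_intCast (algebraMap ℝ ℂ)] at hres
    rw [← (algebraMap ℝ ℂ).injective hres]
    simp [map_ofNat]
  have ha1 : a ^ 2 ≠ 1 := fun ha => by
    rcases sq_eq_one_iff.mp ha with rfl | rfl
    · exact hα_one (by simp [← haα])
    · exact hα_neg_one (by simp [← haα])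
  have hmem := Multiset.prod_map_sq_mul_two_sub_sq_mem_Ioo hT0
    (fun x hx => Real.sq_lt.2 (hT x hx)) haT ha1
  rw [← hN, Set.mem_Ioo] at hmem
  norm_cast at hmem
  omega
end

section
/- For each point (x, C) on the affine curve {δ̃₃(x,C) = 0} over an algebraically closed field of characteristic 0, the fiber of the map t ↦ (t³ - t² + 7t + 1, -t² - 7) has exactly one element if (x, C) ≠ (8, 0), and exactly two elements if (x, C) = (8, 0). -/
/-!
On the curve one has `φ(t) = (C + 8 - t C, C)` with `C = -t² - 7`, so `t C = C + 8 - x` on the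
fiber over `(x, C)`. Away from `C = 0` this pins down `t = (C + 8 - x) / C`, and the identity
`δ̃₃(x, C) = (C + 8 - x)² + C² (C + 7)` shows that this `t` does satisfy `C = -t² - 7`. At `C = 0`
the curve forces `x = 8`, and the fiber is the pair of square roots of `-7`.
-/

section

variable {K : Type*}

def deltaTilde3 [CommRing K] (x C : K) : K :=
  x ^ 2 - (2 * C + 16) * x + (C ^ 3 + 8 * C ^ 2 + 16 * C + 64)

def x3Param [CommRing K] (t : K) : K × K :=
  (t ^ 3 - t ^ 2 + 7 * t + 1, -t ^ 2 - 7)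

theorem deltaTilde3_eq [CommRing K] (x C : K) :
    deltaTilde3 x C = (C + 8 - x) ^ 2 + C ^ 2 * (C + 7) := by
  unfold deltaTilde3; ring

theorem x3Param_eq_iff [CommRing K] (t x C : K) :
    x3Param t = (x, C) ↔ C = -t ^ 2 - 7 ∧ t * C = C + 8 - x := by
  simp only [x3Param, Prod.mk.injEq]
  constructor
  · rintro ⟨hx, hC⟩
    exact ⟨hC.symm, by linear_combination (-t + 1) * hC - hx⟩
  · rintro ⟨hC, htC⟩
    exact ⟨by linear_combination (t - 1) * hC - htC, hC.symm⟩

variable [Field K]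

theorem eq_eight_of_deltaTilde3_eq_zero {x : K} (h : deltaTilde3 x 0 = 0) : x = 8 := by
  rw [deltaTilde3_eq] at h
  linear_combination (exp := 2) h

theorem setOf_x3Param_eq_singleton {x C : K} (h : deltaTilde3 x C = 0) (hC : C ≠ 0) :
    {t | x3Param t = (x, C)} = {(C + 8 - x) / C} := by
  ext t
  rw [Set.mem_ofPred_eq, Set.mem_singleton_iff, x3Param_eq_iff]
  constructor
  · rintro ⟨-, htC⟩
    exact eq_div_of_mul_eq hC htC
  · rintro rfl
    set u := (C + 8 - x) / C
    have huC : u * C = C + 8 - x := div_mul_cancel₀ _ hC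
    have hsq : C ^ 2 * (C + u ^ 2 + 7) = 0 := by
      rw [deltaTilde3_eq, ← huC] at h
      linear_combination h
    have hu : C + u ^ 2 + 7 = 0 := (mul_eq_zero.1 hsq).resolve_left (pow_ne_zero 2 hC)
    exact ⟨by linear_combination hu, huC⟩

theorem setOf_x3Param_eq_eight_zero : {t : K | x3Param t = (8, 0)} = {t | t ^ 2 = -7} := by
  ext t
  simp only [Set.mem_ofPred_eq, x3Param_eq_iff, mul_zero, zero_add, sub_self, and_true]
  constructor <;> intro h <;> linear_combination h

theorem ncard_setOf_sq_eq [IsSepClosed K] [NeZero (2 : K)] {a : K} (ha : a ≠ 0) :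
    {t : K | t ^ 2 = a}.ncard = 2 := by
  obtain ⟨s, hs⟩ := IsSepClosed.exists_pow_nat_eq a 2
  have hs0 : s ≠ 0 := by rintro rfl; exact ha (by simpa using hs.symm)
  have hne : s ≠ -s := by
    intro hss
    have : (2 : K) * s = 0 := by linear_combination hss
    simp [hs0, two_ne_zero] at this
  have hset : {t : K | t ^ 2 = a} = {s, -s} := by
    ext t
    rw [Set.mem_ofPred_eq, ← hs, sq_eq_sq_iff_eq_or_eq_neg]
    rfl
  rw [hset, Set.ncard_pair hne]

end

/-- For each point `(x, C)` of the curve `δ̃₃(x, C) = 0` over an algebraically closed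
field of characteristic zero, the fiber of `t ↦ (t³ - t² + 7t + 1, -t² - 7)` has
exactly one element if `(x, C) ≠ (8, 0)` and exactly two elements if `(x, C) = (8, 0)`. -/
theorem fibers_of_X3_parametrization (K : Type*) [Field K] [IsAlgClosed K] [CharZero K]
    (x C : K) (h : x ^ 2 - (2 * C + 16) * x + (C ^ 3 + 8 * C ^ 2 + 16 * C + 64) = 0) :
    ((x, C) ≠ (8, 0) →
      {t : K | (t ^ 3 - t ^ 2 + 7 * t + 1, -t ^ 2 - 7) = (x, C)}.ncard = 1) ∧
    ((x, C) = (8, 0) →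
      {t : K | (t ^ 3 - t ^ 2 + 7 * t + 1, -t ^ 2 - 7) = (x, C)}.ncard = 2) := by
  change deltaTilde3 x C = 0 at h
  change ((x, C) ≠ (8, 0) → {t | x3Param t = (x, C)}.ncard = 1) ∧
    ((x, C) = (8, 0) → {t | x3Param t = (x, C)}.ncard = 2)
  refine ⟨fun hne => ?_, fun heq => ?_⟩
  · have hC : C ≠ 0 := by
      rintro rfl
      exact hne (by rw [eq_eight_of_deltaTilde3_eq_zero h])
    rw [setOf_x3Param_eq_singleton h hC, Set.ncard_singleton]
  · rw [heq, setOf_x3Param_eq_eight_zero, ncard_setOf_sq_eq (by norm_num)]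
end
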